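/- Let α ∈ (0,1) and θ ∈ (0,1). Suppose u : {0,…,n} × [0,1] → [0,1] satisfies: u(n,v) = 1 whenever v ≥ α/2; u(0,v) = 0 whenever v ≤ α/2; and in all other cases (1−v) F_{u(y,v)}(y−1) + v F_{u(y,v)}(y) = α/2. Suppose ℓ : {0,…,n} × [0,1] → [0,1] satisfies: ℓ(0,v) = 0 whenever v ≤ 1−α/2; ℓ(n,v) = 1 whenever v ≥ 1−α/2; and in all other cases (1−v)(1 − F_{ℓ(y,v)}(y−1)) + v (1 − F_{ℓ(y,v)}(y)) = α/2. Then Korn's data-randomized confidence interval, defined using W with conditional distribution uniform on {1/C(n,y), …, C(n,y)/C(n,y)} given Y = y (where C(n,y) = n choose y), satisfies both tail conditions: Σ_{y=0}^{n} Σ_{k=1}^{C(n,y)} (f_θ(y)/C(n,y)) · 𝟙[u(y, k/C(n,y)) < θ] ≤ α/2 and Σ_{y=0}^{n} Σ_{k=0}^{C(n,y)−1} (f_θ(y)/C(n,y)) · 𝟙[ℓ(y, k/C(n,y)) > θ] ≤ α/2. -/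

import Mathlib

/-- The Binomial(n, θ) probability mass function `f_θ(y) = C(n,y) θ^y (1-θ)^(n-y)`. -/
noncomputable def binomP (n : ℕ) (θ : ℝ) (y : ℕ) : ℝ :=
  (n.choose y : ℝ) * θ ^ y * (1 - θ) ^ (n - y)

/-- `F_θ(y-1) = ∑_{j=0}^{y-1} f_θ(j)`, with the convention `F_θ(-1) = 0`. -/
noncomputable def binomCDFpred (n : ℕ) (θ : ℝ) (y : ℕ) : ℝ :=
  ∑ j ∈ Finset.range y, binomP n θ j

/-- The Binomial(n, θ) cumulative distribution function `F_θ(y) = ∑_{j=0}^{y} f_θ(j)`. -/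
noncomputable def binomCDF (n : ℕ) (θ : ℝ) (y : ℕ) : ℝ :=
  ∑ j ∈ Finset.range (y + 1), binomP n θ j

/-!
Write `G_θ(y, v) = F_θ(y - 1) + v f_θ(y)` for Stevens' randomized CDF. It is antitone in `θ`,
because `d/dθ F_θ(y) = -C(n, y + 1) (y + 1) θ^y (1 - θ)^(n - y - 1) ≤ 0`; so `u(y, v) < θ`
forces `G_θ(y, v) ≤ α/2`. Order the outcomes `(y, k)` lexicographically: the event
`u(Y, W) < θ` has probability at most the mass of all outcomes up to its last element `(y, k)`,
and that mass is `G_θ(y, k / C(n, y)) ≤ α/2`. The lower tail is the upper tail of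
`n - Y ~ Binomial(n, 1 - θ)` for the reflected endpoint `1 - ℓ(n - y, 1 - v)`.
-/

open Finset

section Binomial

variable (n : ℕ)

lemma binomP_nonneg {θ : ℝ} (h0 : 0 ≤ θ) (h1 : θ ≤ 1) (y : ℕ) : 0 ≤ binomP n θ y := by
  have : 0 ≤ 1 - θ := by linarith
  unfold binomP
  positivity

lemma binomP_zero_le_one {θ : ℝ} (h0 : 0 ≤ θ) (h1 : θ ≤ 1) : binomP n θ 0 ≤ 1 := by
  simpa [binomP] using pow_le_one₀ (n := n) (by linarith) (by linarith : 1 - θ ≤ 1)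

lemma binomP_one_sub (θ : ℝ) {y : ℕ} (hy : y ≤ n) :
    binomP n (1 - θ) y = binomP n θ (n - y) := by
  unfold binomP
  rw [Nat.choose_symm hy, Nat.sub_sub_self hy, sub_sub_cancel]
  ring

lemma sum_range_binomP (θ : ℝ) : ∑ y ∈ range (n + 1), binomP n θ y = 1 := by
  have h := (add_pow θ (1 - θ) n).symm
  rw [add_sub_cancel, one_pow] at h
  rw [← h]
  refine sum_congr rfl fun y _ => ?_
  unfold binomP
  ring

lemma binomCDF_eq_binomCDFpred_add (θ : ℝ) (y : ℕ) :
    binomCDF n θ y = binomCDFpred n θ y + binomP n θ y :=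
  sum_range_succ _ _

lemma binomCDF_one_sub (θ : ℝ) {y : ℕ} (hy : y ≤ n) :
    binomCDF n (1 - θ) y = 1 - binomCDFpred n θ (n - y) := by
  have hreflect : binomCDF n (1 - θ) y = ∑ j ∈ Ico (n - y) (n + 1), binomP n θ j :=
    calc binomCDF n (1 - θ) y = ∑ j ∈ Ico 0 (y + 1), binomP n θ (n - j) := by
          rw [binomCDF, ← Nat.Ico_zero_eq_range]
          exact sum_congr rfl fun j hj => binomP_one_sub n θ (by simp at hj; omega)
      _ = ∑ j ∈ Ico (n - y) (n + 1), binomP n θ j := by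
          rw [sum_Ico_reflect _ _ (by omega : y + 1 ≤ n + 1), Nat.add_sub_add_right,
            Nat.sub_zero]
  rw [hreflect, ← sum_range_binomP n θ, ← sum_range_add_sum_Ico _ (by omega : n - y ≤ n + 1),
    binomCDFpred]
  ring

lemma binomCDFpred_one_sub (θ : ℝ) {y : ℕ} (hy : y ≤ n) :
    binomCDFpred n (1 - θ) y = 1 - binomCDF n θ (n - y) := by
  have h := binomCDF_one_sub n θ hy
  rw [binomCDF_eq_binomCDFpred_add, binomP_one_sub n θ hy] at h
  rw [binomCDF_eq_binomCDFpred_add]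
  linarith

lemma hasDerivAt_binomCDF (y : ℕ) (t : ℝ) :
    HasDerivAt (fun s => binomCDF n s y)
      (-((n.choose (y + 1) : ℝ) * (y + 1 : ℕ) * t ^ y * (1 - t) ^ (n - (y + 1)))) t := by
  set a : ℕ → ℝ := fun j => n.choose j * j * t ^ (j - 1) * (1 - t) ^ (n - j)
  -- the derivatives of the terms telescope
  have hterm : ∀ j, HasDerivAt (fun s => binomP n s j) (a j - a (j + 1)) t := by
    intro j
    have hchoose : (n.choose (j + 1) * (j + 1 : ℕ) : ℝ) = n.choose j * (n - j : ℕ) := by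
      exact_mod_cast Nat.choose_succ_right_eq n j
    have h : HasDerivAt (fun s => binomP n s j)
        (n.choose j * (j * t ^ (j - 1)) * (1 - t) ^ (n - j)
          + n.choose j * t ^ j * ((n - j : ℕ) * (1 - t) ^ (n - j - 1) * -1)) t :=
      ((hasDerivAt_pow j t).const_mul (n.choose j : ℝ)).mul
        (((hasDerivAt_id t).const_sub 1).pow (n - j))
    convert h using 1
    simp only [a, Nat.add_sub_cancel, show n - (j + 1) = n - j - 1 by omega]
    linear_combination (-(t ^ j * (1 - t) ^ (n - j - 1))) * hchoose
  have h := HasDerivAt.fun_sum (u := range (y + 1)) fun j _ => hterm j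
  rw [sum_range_sub'] at h
  exact h.congr_deriv (by simp [a])

lemma binomCDF_antitoneOn (y : ℕ) : AntitoneOn (fun t => binomCDF n t y) (Set.Icc 0 1) := by
  refine antitoneOn_of_hasDerivWithinAt_nonpos (convex_Icc 0 1)
    (fun t _ => (hasDerivAt_binomCDF n y t).continuousAt.continuousWithinAt)
    (fun t _ => (hasDerivAt_binomCDF n y t).hasDerivWithinAt) fun t ht => ?_
  rw [interior_Icc] at ht
  have : 0 ≤ 1 - t := by linarith [ht.2]
  have := ht.1.le
  simp only [neg_nonpos]
  positivity

lemma binomCDFpred_antitoneOn (y : ℕ) :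
    AntitoneOn (fun t => binomCDFpred n t y) (Set.Icc 0 1) := by
  cases y with
  | zero => simpa [binomCDFpred] using antitoneOn_const
  | succ y => exact binomCDF_antitoneOn n y

end Binomial

lemma card_le_max'_of_forall_pos {s : Finset ℕ} (hs : s.Nonempty) (hpos : ∀ k ∈ s, 0 < k) :
    #s ≤ s.max' hs := by
  have hsub : s ⊆ Icc 1 (s.max' hs) := fun k hk => mem_Icc.2 ⟨hpos k hk, s.le_max' k hk⟩
  simpa using card_le_card hsub

-- Only the last nonzero term matters: every earlier `S j` is bounded by its share `p j`.
lemma sum_range_le_of_eq_zero_or {N : ℕ} {p S : ℕ → ℝ} {c : ℝ} (hc : 0 ≤ c)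
    (hSp : ∀ y < N, S y ≤ p y)
    (hS : ∀ y < N, S y = 0 ∨ ∑ j ∈ range y, p j + S y ≤ c) :
    ∑ y ∈ range N, S y ≤ c := by
  induction N with
  | zero => simpa
  | succ N ih =>
    rw [sum_range_succ]
    rcases hS N (Nat.lt_succ_self N) with h | h
    · rw [h, add_zero]
      exact ih (fun y hy => hSp y (by omega)) fun y hy => hS y (by omega)
    · have : ∑ y ∈ range N, S y ≤ ∑ y ∈ range N, p y :=
        sum_le_sum fun y hy => hSp y (by simp at hy; omega)
      linarith

structure IsUpperEndpoint (n : ℕ) (α : ℝ) (u : ℕ → ℝ → ℝ) : Prop where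
  mem_Icc : ∀ y ≤ n, ∀ v ∈ Set.Icc (0 : ℝ) 1, u y v ∈ Set.Icc (0 : ℝ) 1
  eq_one : ∀ v ∈ Set.Icc (0 : ℝ) 1, α / 2 ≤ v → u n v = 1
  randomizedCDF_eq : ∀ y ≤ n, ∀ v ∈ Set.Icc (0 : ℝ) 1,
    ¬(y = n ∧ α / 2 ≤ v) → ¬(y = 0 ∧ v ≤ α / 2) →
      (1 - v) * binomCDFpred n (u y v) y + v * binomCDF n (u y v) y = α / 2

lemma binomCDFpred_add_mul_binomP_le {n y : ℕ} {t θ v : ℝ} (ht : t ∈ Set.Icc 0 1)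
    (hθ : θ ∈ Set.Icc 0 1) (htθ : t ≤ θ) (hv : v ∈ Set.Icc 0 1) :
    binomCDFpred n θ y + v * binomP n θ y ≤
      (1 - v) * binomCDFpred n t y + v * binomCDF n t y := by
  have hpred : binomCDFpred n θ y ≤ binomCDFpred n t y :=
    binomCDFpred_antitoneOn n y ht hθ htθ
  have hcdf : binomCDF n θ y ≤ binomCDF n t y := binomCDF_antitoneOn n y ht hθ htθ
  have hv1 : 0 ≤ 1 - v := by linarith [hv.2]
  rw [binomCDF_eq_binomCDFpred_add] at hcdf
  linarith [mul_le_mul_of_nonneg_left hpred hv1, mul_le_mul_of_nonneg_left hcdf hv.1]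

namespace IsUpperEndpoint

variable {n : ℕ} {α θ : ℝ} {u : ℕ → ℝ → ℝ}

lemma binomCDFpred_add_mul_binomP_le_of_lt (hu : IsUpperEndpoint n α u) (hθ0 : 0 ≤ θ)
    (hθ1 : θ < 1) {y : ℕ} (hy : y ≤ n) {v : ℝ} (hv : v ∈ Set.Ioc 0 1) (hlt : u y v < θ) :
    binomCDFpred n θ y + v * binomP n θ y ≤ α / 2 := by
  have hvI : v ∈ Set.Icc (0 : ℝ) 1 := Set.Ioc_subset_Icc_self hv
  by_cases htop : y = n ∧ α / 2 ≤ v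
  · obtain ⟨rfl, hv'⟩ := htop
    linarith [hu.eq_one v hvI hv']
  by_cases hbot : y = 0 ∧ v ≤ α / 2
  · obtain ⟨rfl, hv'⟩ := hbot
    simp only [binomCDFpred, range_zero, sum_empty, zero_add]
    exact (mul_le_of_le_one_right hv.1.le (binomP_zero_le_one n hθ0 hθ1.le)).trans hv'
  rw [← hu.randomizedCDF_eq y hy v hvI htop hbot]
  exact binomCDFpred_add_mul_binomP_le (hu.mem_Icc y hy v hvI) ⟨hθ0, hθ1.le⟩ hlt.le hvI

theorem sum_le (hu : IsUpperEndpoint n α u) (hα : 0 ≤ α) (hθ0 : 0 ≤ θ) (hθ1 : θ < 1) :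
    ∑ y ∈ range (n + 1), ∑ k ∈ Icc 1 (n.choose y),
      binomP n θ y / (n.choose y : ℝ) *
        (if u y ((k : ℝ) / (n.choose y : ℝ)) < θ then (1 : ℝ) else 0) ≤ α / 2 := by
  refine sum_range_le_of_eq_zero_or (p := binomP n θ) (by linarith) ?_ ?_
  all_goals
    intro y hy
    have hy : y ≤ n := by omega
    have hC : (0 : ℝ) < n.choose y := by exact_mod_cast Nat.choose_pos hy
    rw [← mul_sum, sum_boole]
    set K := {k ∈ Icc 1 (n.choose y) | u y (((k : ℕ) : ℝ) / (n.choose y : ℝ)) < θ}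
  · have hcard : (#K : ℝ) ≤ n.choose y := by
      exact_mod_cast (card_filter_le _ _).trans (by simp)
    rw [div_mul_comm]
    exact mul_le_of_le_one_left (binomP_nonneg n hθ0 hθ1.le y) ((div_le_one hC).2 hcard)
  · rcases K.eq_empty_or_nonempty with hK | hK
    · left
      simp [hK]
    right
    obtain ⟨hk₀, hlt⟩ := mem_filter.1 (K.max'_mem hK)
    have hk₀ := Finset.mem_Icc.1 hk₀
    have hcard : (#K : ℝ) ≤ K.max' hK := by
      exact_mod_cast card_le_max'_of_forall_pos hK fun k hk =>
        (Finset.mem_Icc.1 (mem_filter.1 hk).1).1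
    have hv : (K.max' hK : ℝ) / n.choose y ∈ Set.Ioc 0 1 :=
      ⟨div_pos (by exact_mod_cast hk₀.1) hC, (div_le_one hC).2 (by exact_mod_cast hk₀.2)⟩
    have hpt := hu.binomCDFpred_add_mul_binomP_le_of_lt hθ0 hθ1 hy hv hlt
    have hf := binomP_nonneg n hθ0 hθ1.le y
    rw [div_mul_comm, ← binomCDFpred]
    refine le_trans ?_ hpt
    gcongr

end IsUpperEndpoint

lemma isUpperEndpoint_reflect {n : ℕ} {α : ℝ} {l : ℕ → ℝ → ℝ}
    (hl01 : ∀ y ≤ n, ∀ v ∈ Set.Icc (0 : ℝ) 1, l y v ∈ Set.Icc (0 : ℝ) 1)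
    (hl0 : ∀ v ∈ Set.Icc (0 : ℝ) 1, v ≤ 1 - α / 2 → l 0 v = 0)
    (hl : ∀ y ≤ n, ∀ v ∈ Set.Icc (0 : ℝ) 1,
      ¬(y = 0 ∧ v ≤ 1 - α / 2) → ¬(y = n ∧ 1 - α / 2 ≤ v) →
      (1 - v) * (1 - binomCDFpred n (l y v) y) + v * (1 - binomCDF n (l y v) y) = α / 2) :
    IsUpperEndpoint n α fun y v => 1 - l (n - y) (1 - v) where
  mem_Icc y hy v hv := Set.Icc.mem_iff_one_sub_mem.1 <|
    hl01 (n - y) (by omega) (1 - v) (Set.Icc.mem_iff_one_sub_mem.1 hv)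
  eq_one v hv hαv := by
    rw [Nat.sub_self, hl0 (1 - v) (Set.Icc.mem_iff_one_sub_mem.1 hv) (by linarith), sub_zero]
  randomizedCDF_eq y hy v hv htop hbot := by
    have h := hl (n - y) (by omega) (1 - v) (Set.Icc.mem_iff_one_sub_mem.1 hv)
      (fun h => htop ⟨by omega, by linarith [h.2]⟩)
      (fun h => hbot ⟨by omega, by linarith [h.2]⟩)
    rw [binomCDFpred_one_sub n _ hy, binomCDF_one_sub n _ hy]
    linarith

lemma sum_range_eq_sum_Icc_sub {M : Type*} [AddCommMonoid M] (C : ℕ) (f : ℕ → M) :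
    ∑ k ∈ range C, f k = ∑ k ∈ Icc 1 C, f (C - k) := by
  refine sum_nbij' (C - ·) (C - ·) ?_ ?_ ?_ ?_
    fun k hk => by rw [Nat.sub_sub_self (mem_range.1 hk).le]
  all_goals
    intro k hk
    simp only [mem_range, Finset.mem_Icc] at hk ⊢
    omega

lemma sum_lower_eq_sum_upper_reflect (n : ℕ) (θ : ℝ) (l : ℕ → ℝ → ℝ) :
    ∑ y ∈ range (n + 1), ∑ k ∈ range (n.choose y),
      binomP n θ y / (n.choose y : ℝ) *
        (if θ < l y ((k : ℝ) / (n.choose y : ℝ)) then (1 : ℝ) else 0) =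
    ∑ y ∈ range (n + 1), ∑ k ∈ Icc 1 (n.choose y),
      binomP n (1 - θ) y / (n.choose y : ℝ) *
        (if 1 - l (n - y) (1 - (k : ℝ) / (n.choose y : ℝ)) < 1 - θ then (1 : ℝ) else 0) := by
  rw [← sum_range_reflect]
  refine sum_congr rfl fun y hy => ?_
  have hy : y ≤ n := by simp at hy; omega
  have hC : (n.choose y : ℝ) ≠ 0 := by exact_mod_cast (Nat.choose_pos hy).ne'
  rw [show n + 1 - 1 - y = n - y by omega, Nat.choose_symm hy, ← binomP_one_sub n θ hy,
    sum_range_eq_sum_Icc_sub]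
  refine sum_congr rfl fun k hk => ?_
  rw [Nat.cast_sub (Finset.mem_Icc.1 hk).2, sub_div, div_self hC]
  simp only [sub_lt_sub_iff_left]

theorem stmt_15_general (n : ℕ) (α : ℝ) (hα : α ∈ Set.Ioo (0 : ℝ) 1)
    (θ : ℝ) (hθ : θ ∈ Set.Ioo (0 : ℝ) 1)
    (u : ℕ → ℝ → ℝ)
    (hu01 : ∀ y ≤ n, ∀ v ∈ Set.Icc (0 : ℝ) 1, u y v ∈ Set.Icc (0 : ℝ) 1)
    (hun : ∀ v ∈ Set.Icc (0 : ℝ) 1, α / 2 ≤ v → u n v = 1)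
    (hu : ∀ y ≤ n, ∀ v ∈ Set.Icc (0 : ℝ) 1, ¬(y = n ∧ α / 2 ≤ v) → ¬(y = 0 ∧ v ≤ α / 2) →
      (1 - v) * binomCDFpred n (u y v) y + v * binomCDF n (u y v) y = α / 2)
    (l : ℕ → ℝ → ℝ)
    (hl01 : ∀ y ≤ n, ∀ v ∈ Set.Icc (0 : ℝ) 1, l y v ∈ Set.Icc (0 : ℝ) 1)
    (hl0 : ∀ v ∈ Set.Icc (0 : ℝ) 1, v ≤ 1 - α / 2 → l 0 v = 0)
    (hl : ∀ y ≤ n, ∀ v ∈ Set.Icc (0 : ℝ) 1,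
      ¬(y = 0 ∧ v ≤ 1 - α / 2) → ¬(y = n ∧ 1 - α / 2 ≤ v) →
      (1 - v) * (1 - binomCDFpred n (l y v) y) + v * (1 - binomCDF n (l y v) y) = α / 2) :
    (∑ y ∈ Finset.range (n + 1), ∑ k ∈ Finset.Icc 1 (n.choose y),
      binomP n θ y / (n.choose y : ℝ) *
        (if u y ((k : ℝ) / (n.choose y : ℝ)) < θ then (1 : ℝ) else 0)) ≤ α / 2 ∧
    (∑ y ∈ Finset.range (n + 1), ∑ k ∈ Finset.range (n.choose y),
      binomP n θ y / (n.choose y : ℝ) *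
        (if θ < l y ((k : ℝ) / (n.choose y : ℝ)) then (1 : ℝ) else 0)) ≤ α / 2 := by
  obtain ⟨hα0, -⟩ := hα
  obtain ⟨hθ0, hθ1⟩ := hθ
  constructor
  · exact IsUpperEndpoint.sum_le ⟨hu01, hun, hu⟩ hα0.le hθ0.le hθ1
  · rw [sum_lower_eq_sum_upper_reflect]
    exact (isUpperEndpoint_reflect hl01 hl0 hl).sum_le hα0.le (by linarith) (by linarith)

/-- Korn's data-randomized confidence interval, built from Stevens' randomized endpoints
`u` and `ℓ` evaluated at the data-randomization variables `W` (uniform on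
`{1/C(n,y), …, C(n,y)/C(n,y)}` given `Y = y`) and `W̃ = W - 1/C(n,y)`, satisfies both tail
conditions `P_θ(θ > u(Y,W)) ≤ α/2` and `P_θ(θ < ℓ(Y,W̃)) ≤ α/2`. -/
theorem stmt_15 (n : ℕ) (hn : 1 ≤ n) (α : ℝ) (hα : α ∈ Set.Ioo (0 : ℝ) 1)
    (θ : ℝ) (hθ : θ ∈ Set.Ioo (0 : ℝ) 1)
    (u : ℕ → ℝ → ℝ)
    (hu01 : ∀ y ≤ n, ∀ v ∈ Set.Icc (0 : ℝ) 1, u y v ∈ Set.Icc (0 : ℝ) 1)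
    (hun : ∀ v ∈ Set.Icc (0 : ℝ) 1, α / 2 ≤ v → u n v = 1)
    (hu0 : ∀ v ∈ Set.Icc (0 : ℝ) 1, v ≤ α / 2 → u 0 v = 0)
    (hu : ∀ y ≤ n, ∀ v ∈ Set.Icc (0 : ℝ) 1, ¬(y = n ∧ α / 2 ≤ v) → ¬(y = 0 ∧ v ≤ α / 2) →
      (1 - v) * binomCDFpred n (u y v) y + v * binomCDF n (u y v) y = α / 2)
    (l : ℕ → ℝ → ℝ)
    (hl01 : ∀ y ≤ n, ∀ v ∈ Set.Icc (0 : ℝ) 1, l y v ∈ Set.Icc (0 : ℝ) 1)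
    (hl0 : ∀ v ∈ Set.Icc (0 : ℝ) 1, v ≤ 1 - α / 2 → l 0 v = 0)
    (hln : ∀ v ∈ Set.Icc (0 : ℝ) 1, 1 - α / 2 ≤ v → l n v = 1)
    (hl : ∀ y ≤ n, ∀ v ∈ Set.Icc (0 : ℝ) 1,
      ¬(y = 0 ∧ v ≤ 1 - α / 2) → ¬(y = n ∧ 1 - α / 2 ≤ v) →
      (1 - v) * (1 - binomCDFpred n (l y v) y) + v * (1 - binomCDF n (l y v) y) = α / 2) :
    (∑ y ∈ Finset.range (n + 1), ∑ k ∈ Finset.Icc 1 (n.choose y),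
      binomP n θ y / (n.choose y : ℝ) *
        (if u y ((k : ℝ) / (n.choose y : ℝ)) < θ then (1 : ℝ) else 0)) ≤ α / 2 ∧
    (∑ y ∈ Finset.range (n + 1), ∑ k ∈ Finset.range (n.choose y),
      binomP n θ y / (n.choose y : ℝ) *
        (if θ < l y ((k : ℝ) / (n.choose y : ℝ)) then (1 : ℝ) else 0)) ≤ α / 2 :=
  stmt_15_general n α hα θ hθ u hu01 hun hu l hl01 hl0 hl
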